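/- arXiv:2201.02186 — 3 statements merged into one kernel-verified Lean document; each statement's English description precedes it below -/
import Mathlib

section
/- Let f be a strongly nondegenerate self-concordant function on an open convex domain D_f ⊆ R_{>0}^n with gradient g. Then for all x, y ∈ D_f: f(y) − f(x) ≥ ⟨g(x) + 1/(n x), y − x⟩ + (1/n) Σ_i (log x_i − log y_i), where 1/(nx) denotes the vector with entries 1/(n x_i). -/
/-!
The Dikin ellipsoid `{w | (w - z)ᵀ H(z) (w - z) < 1}` lies in `D ⊆ ℝⁿ₊`, so it cannot meet
the hyperplane `wᵢ = 0`. This forces `vᵢ² ≤ (vᵀ H(z) v) zᵢ²` for every `i`, and averaging over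
`i` gives `H(z) ≽ (1/n) Diag (1 / z²)`. Hence along the segment `c t = x + t (y - x)` the function
`φ t = f (c t) + (1/n) ∑ᵢ log (c t)ᵢ` has `φ'' ≥ 0`, so `φ 1 - φ 0 ≥ φ' 0`, which is the claim.
-/

open Set Finset

/-- Local quadratic form `v ↦ vᵀ H v` induced by a Hessian matrix `H`. -/
noncomputable def quadForm {n : ℕ} (H : Matrix (Fin n) (Fin n) ℝ) (v : Fin n → ℝ) : ℝ :=
  dotProduct v (H.mulVec v)

lemma quadForm_smul {n : ℕ} (H : Matrix (Fin n) (Fin n) ℝ) (a : ℝ) (v : Fin n → ℝ) :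
    quadForm H (a • v) = a ^ 2 * quadForm H v := by
  simp only [quadForm, Matrix.mulVec_smul, dotProduct_smul, smul_dotProduct, smul_eq_mul]
  ring

section DikinEllipsoid

variable {n : ℕ} {A : Matrix (Fin n) (Fin n) ℝ} {z : Fin n → ℝ}

lemma sq_le_quadForm_mul_sq_of_ne_zero (hpos : ∀ y, quadForm A (y - z) < 1 → ∀ i, 0 < y i)
    {v : Fin n → ℝ} {i : Fin n} (hvi : v i ≠ 0) : v i ^ 2 ≤ quadForm A v * z i ^ 2 := by
  by_contra! hlt
  -- the point of the line `z + ℝ v` on the hyperplane `wᵢ = 0` lies in the ellipsoid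
  have hq : quadForm A ((z + (-z i / v i) • v) - z) < 1 := by
    rw [add_sub_cancel_left, quadForm_smul, div_pow, neg_sq, div_mul_eq_mul_div,
      div_lt_one (by positivity)]
    linarith
  have := hpos _ hq i
  simp [hvi] at this

lemma quadForm_nonneg_of_forall_pos (hpos : ∀ y, quadForm A (y - z) < 1 → ∀ i, 0 < y i)
    (v : Fin n → ℝ) : 0 ≤ quadForm A v := by
  by_contra! hq
  obtain ⟨i, hi⟩ : ∃ i, v i ≠ 0 := by
    by_contra! h
    simp [funext h, quadForm] at hq
  nlinarith [sq_le_quadForm_mul_sq_of_ne_zero hpos hi, sq_pos_of_ne_zero hi, sq_nonneg (z i)]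

lemma sq_le_quadForm_mul_sq (hpos : ∀ y, quadForm A (y - z) < 1 → ∀ i, 0 < y i)
    (v : Fin n → ℝ) (i : Fin n) : v i ^ 2 ≤ quadForm A v * z i ^ 2 := by
  rcases eq_or_ne (v i) 0 with hvi | hvi
  · rw [hvi, zero_pow two_ne_zero]
    exact mul_nonneg (quadForm_nonneg_of_forall_pos hpos v) (sq_nonneg _)
  · exact sq_le_quadForm_mul_sq_of_ne_zero hpos hvi

lemma one_div_mul_sum_sq_div_le_quadForm (hpos : ∀ y, quadForm A (y - z) < 1 → ∀ i, 0 < y i)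
    (v : Fin n → ℝ) : 1 / (n : ℝ) * ∑ i, (v i / z i) ^ 2 ≤ quadForm A v := by
  have hz : ∀ i, 0 < z i := hpos z (by simp [quadForm])
  have hsum : ∑ i, (v i / z i) ^ 2 ≤ ∑ _i : Fin n, quadForm A v :=
    sum_le_sum fun i _ => by
      rw [div_pow, div_le_iff₀ (pow_pos (hz i) 2)]
      exact sq_le_quadForm_mul_sq hpos v i
  rw [sum_const, card_univ, Fintype.card_fin, nsmul_eq_mul] at hsum
  rcases n.eq_zero_or_pos with rfl | hn
  · simpa using quadForm_nonneg_of_forall_pos hpos v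
  · rw [one_div, inv_mul_le_iff₀ (by positivity)]
    exact hsum

end DikinEllipsoid

lemma mul_sub_le_sub_of_hasDerivAt_of_hasDerivAt_nonneg {φ φ' φ'' : ℝ → ℝ} {a b : ℝ}
    (hab : a < b) (hφ : ∀ t ∈ Icc a b, HasDerivAt φ (φ' t) t)
    (hφ' : ∀ t ∈ Icc a b, HasDerivAt φ' (φ'' t) t) (hφ'' : ∀ t ∈ Icc a b, 0 ≤ φ'' t) :
    φ' a * (b - a) ≤ φ b - φ a := by
  have hint : interior (Icc a b) ⊆ Icc a b := interior_subset
  have hconvex : ConvexOn ℝ (Icc a b) φ :=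
    convexOn_of_hasDerivWithinAt2_nonneg (convex_Icc a b)
      (fun t ht => (hφ t ht).continuousAt.continuousWithinAt)
      (fun t ht => (hφ t (hint ht)).hasDerivWithinAt)
      (fun t ht => (hφ' t (hint ht)).hasDerivWithinAt) (fun t ht => hφ'' t (hint ht))
  have hslope := hconvex.le_slope_of_hasDerivAt (left_mem_Icc.2 hab.le)
    (right_mem_Icc.2 hab.le) hab (hφ a (left_mem_Icc.2 hab.le))
  rwa [slope_def_field, le_div_iff₀ (sub_pos.2 hab)] at hslope

lemma hasDerivAt_add_smul {n : ℕ} (x d : Fin n → ℝ) (t : ℝ) :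
    HasDerivAt (fun s : ℝ => x + s • d) d t := by
  simpa using ((hasDerivAt_id t).smul_const d).const_add x

lemma hasDerivAt_sum_log_add_smul {n : ℕ} {x d : Fin n → ℝ} {t : ℝ}
    (hpos : ∀ i, 0 < (x + t • d) i) :
    HasDerivAt (fun s => ∑ i, Real.log ((x + s • d) i)) (∑ i, d i / (x + t • d) i) t :=
  HasDerivAt.fun_sum fun i _ =>
    (hasDerivAt_pi.1 (hasDerivAt_add_smul x d t) i).log (hpos i).ne'

lemma hasDerivAt_sum_div_add_smul {n : ℕ} {x d : Fin n → ℝ} {t : ℝ}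
    (hpos : ∀ i, 0 < (x + t • d) i) :
    HasDerivAt (fun s => ∑ i, d i / (x + s • d) i) (-∑ i, (d i / (x + t • d) i) ^ 2) t := by
  rw [← sum_neg_distrib]
  refine HasDerivAt.fun_sum fun i _ => ?_
  exact ((hasDerivAt_const t (d i)).div (hasDerivAt_pi.1 (hasDerivAt_add_smul x d t) i)
    (hpos i).ne').congr_deriv (by ring)

section Restriction

variable {n : ℕ} {D : Set (Fin n → ℝ)} {f : (Fin n → ℝ) → ℝ}
  {g : (Fin n → ℝ) → (Fin n → ℝ)} {H : (Fin n → ℝ) → Matrix (Fin n) (Fin n) ℝ}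
  {x d : Fin n → ℝ} {t : ℝ}

lemma hasDerivAt_comp_add_smul (hopen : IsOpen D) (hf : ContDiffOn ℝ 2 f D)
    (hgrad : ∀ x ∈ D, ∀ v : Fin n → ℝ, fderiv ℝ f x v = dotProduct (g x) v)
    (ht : x + t • d ∈ D) :
    HasDerivAt (fun s => f (x + s • d)) (dotProduct (g (x + t • d)) d) t := by
  have hdiff : DifferentiableAt ℝ f (x + t • d) :=
    (hf.differentiableOn two_ne_zero).differentiableAt (hopen.mem_nhds ht)
  rw [← hgrad _ ht]
  exact hdiff.hasFDerivAt.comp_hasDerivAt t (hasDerivAt_add_smul x d t)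

lemma differentiableAt_dotProduct_of_fderiv_eq (hopen : IsOpen D) (hf : ContDiffOn ℝ 2 f D)
    (hgrad : ∀ x ∈ D, ∀ v : Fin n → ℝ, fderiv ℝ f x v = dotProduct (g x) v)
    {z : Fin n → ℝ} (hz : z ∈ D) (v : Fin n → ℝ) :
    DifferentiableAt ℝ (fun y => dotProduct (g y) v) z := by
  have hC1 : ContDiffOn ℝ 1 (fun y => fderiv ℝ f y v) D :=
    (hf.fderiv_of_isOpen hopen (by norm_num)).clm_apply contDiffOn_const
  exact ((hC1.differentiableOn one_ne_zero).differentiableAt (hopen.mem_nhds hz))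
    |>.congr_of_eventuallyEq
      (Filter.eventually_of_mem (hopen.mem_nhds hz) fun y hy => (hgrad y hy v).symm)

lemma hasDerivAt_dotProduct_comp_add_smul (hopen : IsOpen D) (hf : ContDiffOn ℝ 2 f D)
    (hgrad : ∀ x ∈ D, ∀ v : Fin n → ℝ, fderiv ℝ f x v = dotProduct (g x) v)
    (hHess : ∀ x ∈ D, ∀ v w : Fin n → ℝ,
      fderiv ℝ (fun y => dotProduct (g y) v) x w = dotProduct v ((H x).mulVec w))
    (ht : x + t • d ∈ D) :
    HasDerivAt (fun s => dotProduct (g (x + s • d)) d) (quadForm (H (x + t • d)) d) t := by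
  have := (differentiableAt_dotProduct_of_fderiv_eq hopen hf hgrad ht d).hasFDerivAt
    |>.comp_hasDerivAt t (hasDerivAt_add_smul x d t)
  rwa [hHess _ ht d d] at this

end Restriction

theorem stmt2_general (n : ℕ) (D : Set (Fin n → ℝ)) (f : (Fin n → ℝ) → ℝ)
    (g : (Fin n → ℝ) → (Fin n → ℝ))
    (H : (Fin n → ℝ) → Matrix (Fin n) (Fin n) ℝ)
    (hopen : IsOpen D) (hconv : Convex ℝ D)
    (hDpos : ∀ x ∈ D, ∀ i, 0 < x i)
    (hf : ContDiffOn ℝ 2 f D)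
    (hgrad : ∀ x ∈ D, ∀ v : Fin n → ℝ, fderiv ℝ f x v = dotProduct (g x) v)
    (hHess : ∀ x ∈ D, ∀ v w : Fin n → ℝ,
      fderiv ℝ (fun y => dotProduct (g y) v) x w = dotProduct v ((H x).mulVec w))
    (hsc1 : ∀ x ∈ D, ∀ y : Fin n → ℝ, quadForm (H x) (y - x) < 1 → y ∈ D) :
    ∀ x ∈ D, ∀ y ∈ D,
      f y - f x ≥
        dotProduct (fun i => g x i + 1 / ((n : ℝ) * x i)) (y - x) +
          (1 / (n : ℝ)) * ∑ i, (Real.log (x i) - Real.log (y i)) := by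
  intro x hx y hy
  have hseg : ∀ t ∈ Icc (0 : ℝ) 1, x + t • (y - x) ∈ D := fun t ht =>
    hconv.add_smul_sub_mem hx hy ht
  have hslope := mul_sub_le_sub_of_hasDerivAt_of_hasDerivAt_nonneg zero_lt_one
    (fun t ht => (hasDerivAt_comp_add_smul hopen hf hgrad (hseg t ht)).add
      ((hasDerivAt_sum_log_add_smul (hDpos _ (hseg t ht))).const_mul (1 / (n : ℝ))))
    (fun t ht => (hasDerivAt_dotProduct_comp_add_smul hopen hf hgrad hHess (hseg t ht)).add
      ((hasDerivAt_sum_div_add_smul (hDpos _ (hseg t ht))).const_mul (1 / (n : ℝ))))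
    (fun t ht => by
      have := one_div_mul_sum_sq_div_le_quadForm
        (fun w hw => hDpos w (hsc1 _ (hseg t ht) w hw)) (y - x)
      linarith)
  have hdot : dotProduct (fun i => g x i + 1 / ((n : ℝ) * x i)) (y - x)
      = dotProduct (g x) (y - x) + 1 / (n : ℝ) * ∑ i, (y i - x i) / x i := by
    simp only [dotProduct, Pi.sub_apply, mul_sum, ← sum_add_distrib]
    refine sum_congr rfl fun i _ => ?_
    ring
  simp only [Pi.add_apply, Pi.sub_apply, Pi.zero_apply, zero_smul, add_zero, one_smul,
    add_sub_cancel, sub_zero, mul_one] at hslope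
  rw [ge_iff_le, hdot, sum_sub_distrib]
  linarith

/-- log-like lower bound for a self-concordant function `f` with gradient
`g` on a domain contained in the positive orthant:
`f(y) − f(x) ≥ ⟨g(x) + 1/(nx), y − x⟩ + (1/n) Σᵢ (log xᵢ − log yᵢ)`. -/
theorem stmt2 (n : ℕ) (D : Set (Fin n → ℝ)) (f : (Fin n → ℝ) → ℝ)
    (g : (Fin n → ℝ) → (Fin n → ℝ))
    (H : (Fin n → ℝ) → Matrix (Fin n) (Fin n) ℝ)
    (hopen : IsOpen D) (hconv : Convex ℝ D)
    (hDpos : ∀ x ∈ D, ∀ i, 0 < x i)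
    (hf : ContDiffOn ℝ 2 f D)
    (hgrad : ∀ x ∈ D, ∀ v : Fin n → ℝ, fderiv ℝ f x v = dotProduct (g x) v)
    (hHess : ∀ x ∈ D, ∀ v w : Fin n → ℝ,
      fderiv ℝ (fun y => dotProduct (g y) v) x w = dotProduct v ((H x).mulVec w))
    (hposdef : ∀ x ∈ D, (H x).PosDef)
    (hsc1 : ∀ x ∈ D, ∀ y : Fin n → ℝ, quadForm (H x) (y - x) < 1 → y ∈ D)
    (hsc2 : ∀ x ∈ D, ∀ y : Fin n → ℝ, quadForm (H x) (y - x) < 1 →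
      ∀ v : Fin n → ℝ, v ≠ 0 →
        1 - Real.sqrt (quadForm (H x) (y - x)) ≤
            Real.sqrt (quadForm (H y) v) / Real.sqrt (quadForm (H x) v) ∧
        Real.sqrt (quadForm (H y) v) / Real.sqrt (quadForm (H x) v) ≤
            1 / (1 - Real.sqrt (quadForm (H x) (y - x)))) :
    ∀ x ∈ D, ∀ y ∈ D,
      f y - f x ≥
        dotProduct (fun i => g x i + 1 / ((n : ℝ) * x i)) (y - x) +
          (1 / (n : ℝ)) * ∑ i, (Real.log (x i) - Real.log (y i)) :=
  stmt2_general n D f g H hopen hconv hDpos hf hgrad hHess hsc1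
end

section
/- For t sufficiently large and any i < n, in the polytope cex_n(t), the faces defined by the equality x_i = x_{i+1} and by the equality t^{−u_{i+1}}(Σ_{j≤i} x_j) + t^{−u_{i+2}+1} x_{i+1} = Σ_{j=i+2}^{n−1} t^{−u_j} x_j + x_n + t^{−u_n} are disjoint. -/
open scoped BigOperators

/-- The exponents `u_k = 3·2^{k−2} − 1` (for `k ≥ 1`). -/
noncomputable def uexp (k : ℕ) : ℝ := 3 * (2 : ℝ) ^ ((k : ℝ) - 2) - 1

/-- Access to the `j`-th coordinate (1-indexed, `1 ≤ j ≤ n`) of a vector in `Fin n`. -/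
def idx (n : ℕ) (hn : 0 < n) (j : ℕ) : Fin n := ⟨(j - 1) % n, Nat.mod_lt _ hn⟩

/-- Feasibility in the polytope `cex_n(t)`. -/
noncomputable def cexFeas (n : ℕ) (hn : 0 < n) (t : ℝ) (x : Fin n → ℝ) : Prop :=
  (∀ i : ℕ, 1 ≤ i → i ≤ n - 1 →
    t ^ (-uexp i) * (∑ j ∈ Finset.Icc 1 (i - 1), x (idx n hn j)) +
        t ^ (-uexp (i + 1) + 1) * x (idx n hn i) ≤
      (∑ j ∈ Finset.Icc (i + 1) (n - 1), t ^ (-uexp j) * x (idx n hn j)) +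
        x (idx n hn n) + t ^ (-uexp n)) ∧
  (∑ j, x j ≤ 1) ∧
  (0 ≤ x (idx n hn 1)) ∧
  (∀ i : ℕ, 1 ≤ i → i ≤ n - 2 → x (idx n hn i) ≤ x (idx n hn (i + 1))) ∧
  (x (idx n hn (n - 1)) ≤ t ^ (uexp n) * x (idx n hn n))

/-! On the face `x_i = x_{i+1} =: a`, compare the `i`-th constraint with the tight `(i+1)`-st
one. Since `t^{-u_{i+1}} ≤ t^{-u_i}` and `t^{-u_{i+2}+1} ≤ t^{-u_{i+1}}` (the gaps of `u` are at
least `1`), what remains is `t · t^{-u_{i+1}} a ≤ 3 t^{-u_{i+1}} a`, so `a = 0` once `t > 3`.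
By monotonicity `x_1 = ⋯ = x_{i+1} = 0`, and then the tight constraint has left side `0` but
right side at least `t^{-u_n} > 0`. -/

open Finset

lemma sum_Icc_le_add_sum_Icc_succ {M : Type*} [AddCommMonoid M] [PartialOrder M]
    [IsOrderedAddMonoid M] {f : ℕ → M} {a b : ℕ} (ha : 0 ≤ f a) :
    ∑ j ∈ Icc a b, f j ≤ f a + ∑ j ∈ Icc (a + 1) b, f j := by
  rcases le_or_gt a b with hab | hab
  · rw [Icc_add_one_left_eq_Ioc, add_sum_Ioc_eq_sum_Icc hab]
  · rw [Icc_eq_empty_of_lt hab, Icc_eq_empty (by omega), sum_empty, add_zero]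
    exact ha

lemma uexp_add_one_le_succ {k : ℕ} (hk : 1 ≤ k) : uexp k + 1 ≤ uexp (k + 1) := by
  have hk' : (1 : ℝ) ≤ k := by exact_mod_cast hk
  have hsplit : (2 : ℝ) ^ (((k + 1 : ℕ) : ℝ) - 2) = 2 * 2 ^ ((k : ℝ) - 2) := by
    rw [show ((k + 1 : ℕ) : ℝ) - 2 = (k : ℝ) - 2 + 1 by push_cast; ring,
      Real.rpow_add_one two_ne_zero, mul_comm]
  have hhalf : (1 / 2 : ℝ) ≤ 2 ^ ((k : ℝ) - 2) := by
    rw [show (1 / 2 : ℝ) = 2 ^ (-1 : ℝ) by norm_num]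
    exact Real.rpow_le_rpow_of_exponent_le one_le_two (by linarith)
  unfold uexp
  rw [hsplit]
  linarith

namespace cexFeas

variable {n : ℕ} {hn : 0 < n} {t : ℝ} {x : Fin n → ℝ}

lemma monotoneOn (hx : cexFeas n hn t x) :
    MonotoneOn (fun j ↦ x (idx n hn j)) (Set.Icc 1 (n - 1)) :=
  monotoneOn_of_le_add_one Set.ordConnected_Icc fun j _ hj hj1 ↦
    hx.2.2.2.1 j hj.1 (by have := hj1.2; omega)

lemma nonneg (ht : 0 < t) (hx : cexFeas n hn t x) (j : Fin n) : 0 ≤ x j := by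
  have hbelow : ∀ k ∈ Set.Icc 1 (n - 1), 0 ≤ x (idx n hn k) := fun k hk ↦
    hx.2.2.1.trans (hx.monotoneOn ⟨le_rfl, hk.1.trans hk.2⟩ hk hk.1)
  have hj : j = idx n hn (j.val + 1) := by ext; simp [idx, Nat.mod_eq_of_lt j.2]
  rw [hj]
  rcases Nat.lt_or_ge (j.val + 1) n with hlt | hge
  · exact hbelow (j.val + 1) ⟨by omega, by omega⟩
  rw [show j.val + 1 = n by omega]
  rcases Nat.lt_or_ge n 2 with hn1 | hn2
  · rw [show idx n hn n = idx n hn 1 by ext; simp [idx]; omega]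
    exact hx.2.2.1
  · exact nonneg_of_mul_nonneg_right ((hbelow (n - 1) ⟨by omega, le_rfl⟩).trans hx.2.2.2.2)
      (Real.rpow_pos_of_pos ht _)

end cexFeas

/-- The `k`-th constraint of `cex_n(t)` reads `cexLhs t y k ≤ cexRhs n t y (k + 1)`, where
`y j` is the `j`-th coordinate; the second face in `stmt16` is
`cexLhs t y (i + 1) = cexRhs n t y (i + 2)`. -/
noncomputable def cexLhs (t : ℝ) (y : ℕ → ℝ) (k : ℕ) : ℝ :=
  t ^ (-uexp k) * ∑ j ∈ Icc 1 (k - 1), y j + t ^ (-uexp (k + 1) + 1) * y k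

noncomputable def cexRhs (n : ℕ) (t : ℝ) (y : ℕ → ℝ) (k : ℕ) : ℝ :=
  ∑ j ∈ Icc k (n - 1), t ^ (-uexp j) * y j + y n + t ^ (-uexp n)

section Constraints

variable {n i : ℕ} {t : ℝ} {y : ℕ → ℝ}

lemma cexRhs_pos (ht : 0 < t) (hy : ∀ j, 0 ≤ y j) (k : ℕ) : 0 < cexRhs n t y k := by
  have htail : 0 ≤ ∑ j ∈ Icc k (n - 1), t ^ (-uexp j) * y j :=
    sum_nonneg fun j _ ↦ mul_nonneg (Real.rpow_nonneg ht.le _) (hy j)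
  have := Real.rpow_pos_of_pos ht (-uexp n)
  unfold cexRhs
  linarith [hy n]

lemma cexRhs_le_add_cexRhs_succ (ht : 0 ≤ t) (hy : 0 ≤ y i) :
    cexRhs n t y i ≤ t ^ (-uexp i) * y i + cexRhs n t y (i + 1) := by
  have := sum_Icc_le_add_sum_Icc_succ (f := fun j ↦ t ^ (-uexp j) * y j) (b := n - 1)
    (mul_nonneg (Real.rpow_nonneg ht _) hy)
  unfold cexRhs
  linarith

/-- With `a = y i = y (i + 1)` and `q = t ^ (-uexp (i + 1))`, the two relations combine to
`t q a ≤ 3 q a`. -/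
lemma nonpos_of_cexLhs_le_of_eq (ht : 3 < t) (hi : 1 ≤ i) (hy : ∀ j, 0 ≤ y j)
    (heq : y i = y (i + 1)) (hC : cexLhs t y i ≤ cexRhs n t y (i + 1))
    (hE : cexLhs t y (i + 1) = cexRhs n t y (i + 2)) : y (i + 1) ≤ 0 := by
  obtain ⟨k, rfl⟩ : ∃ k, i = k + 1 := ⟨i - 1, by omega⟩
  simp only [add_assoc, Nat.reduceAdd] at heq hC hE ⊢
  have ht0 : 0 < t := by linarith
  have hq : 0 < t ^ (-uexp (k + 2)) := Real.rpow_pos_of_pos ht0 _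
  have hpS : t ^ (-uexp (k + 2)) * ∑ j ∈ Icc 1 k, y j ≤
      t ^ (-uexp (k + 1)) * ∑ j ∈ Icc 1 k, y j :=
    mul_le_mul_of_nonneg_right (Real.rpow_le_rpow_of_exponent_le (by linarith)
      (by linarith [uexp_add_one_le_succ hi])) (sum_nonneg fun j _ ↦ hy j)
  have hra : t ^ (-uexp (k + 3) + 1) * y (k + 2) ≤ t ^ (-uexp (k + 2)) * y (k + 2) :=
    mul_le_mul_of_nonneg_right (Real.rpow_le_rpow_of_exponent_le (by linarith)
      (by linarith [uexp_add_one_le_succ (Nat.le_add_left 1 (k + 1))])) (hy _)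
  have hcomb := hC.trans (cexRhs_le_add_cexRhs_succ ht0.le (hy _))
  rw [← hE] at hcomb
  simp only [cexLhs, Nat.add_sub_cancel, Nat.reduceSubDiff, add_assoc, Nat.reduceAdd,
    sum_Icc_succ_top (Nat.le_add_left 1 k), heq, Real.rpow_add_one ht0.ne' (-uexp (k + 2))] at hcomb
  have hkey : (t - 3) * (t ^ (-uexp (k + 2)) * y (k + 2)) ≤ 0 := by linarith
  exact nonpos_of_mul_nonpos_right (nonpos_of_mul_nonpos_right hkey (by linarith)) hq

lemma cexLhs_succ_ne_cexRhs (ht : 3 < t) (hi : 1 ≤ i) (hy : ∀ j, 0 ≤ y j)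
    (hmono : MonotoneOn y (Set.Icc 1 i)) (heq : y i = y (i + 1))
    (hC : cexLhs t y i ≤ cexRhs n t y (i + 1)) : cexLhs t y (i + 1) ≠ cexRhs n t y (i + 2) := by
  intro hE
  have ha : y (i + 1) = 0 := (nonpos_of_cexLhs_le_of_eq ht hi hy heq hC hE).antisymm (hy _)
  have hS : ∑ j ∈ Icc 1 i, y j = 0 := sum_eq_zero fun j hj ↦ by
    have hj := mem_Icc.1 hj
    exact ((hmono hj ⟨hi, le_rfl⟩ hj.2).trans (heq.trans ha).le).antisymm (hy j)
  have hzero : cexLhs t y (i + 1) = 0 := by simp [cexLhs, hS, ha]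
  exact (cexRhs_pos (by linarith) hy (i + 2)).ne' (hE ▸ hzero)

end Constraints

/-- for `t` large enough and `1 ≤ i < n`, the faces of `cex_n(t)` defined
by `x_i = x_{i+1}` and by
`t^{−u_{i+1}}(Σ_{j≤i} x_j) + t^{−u_{i+2}+1} x_{i+1} = Σ_{j=i+2}^{n−1} t^{−u_j} x_j + x_n + t^{−u_n}`
are disjoint. -/
theorem stmt16 (n : ℕ) (hn : 2 ≤ n) :
    ∃ t₀ : ℝ, 1 < t₀ ∧ ∀ t : ℝ, t₀ ≤ t → ∀ i : ℕ, 1 ≤ i → i < n →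
      ∀ x : Fin n → ℝ, cexFeas n (by omega) t x →
        ¬(x (idx n (by omega) i) = x (idx n (by omega) (i + 1)) ∧
          t ^ (-uexp (i + 1)) * (∑ j ∈ Finset.Icc 1 i, x (idx n (by omega) j)) +
              t ^ (-uexp (i + 2) + 1) * x (idx n (by omega) (i + 1)) =
            (∑ j ∈ Finset.Icc (i + 2) (n - 1), t ^ (-uexp j) * x (idx n (by omega) j)) +
              x (idx n (by omega) n) + t ^ (-uexp n)) := by
  refine ⟨4, by norm_num, fun t ht i hi hin x hx ⟨heq, hE⟩ ↦ ?_⟩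
  exact cexLhs_succ_ne_cexRhs (by linarith) hi (fun j ↦ hx.nonneg (by linarith) _)
    (hx.monotoneOn.mono (Set.Icc_subset_Icc_right (by omega))) heq (hx.1 i hi (by omega)) hE
end

section
/- The feasible set P of the tropical linear program tcex_n is a regular subset of T^n: P equals the closure of its interior. In particular, for every x ∈ P ∩ R^n and every ε > 0, the point x − ε·(2^{n−1}, 2^{n−2}, …, 2, 1) satisfies all the defining inequalities of tcex_n strictly. -/
open scoped BigOperators

/-- Feasible set of the tropical linear program `tcex_n`, with `T = ℝ ∪ {−∞}` modelled
inside `EReal`. -/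
def tcexFeas (n : ℕ) (hn : 0 < n) (x : Fin n → EReal) : Prop :=
  (∀ i : ℕ, 1 ≤ i → i ≤ n - 1 →
    (⨆ j ∈ Finset.Icc 1 (i - 1), (((-uexp i : ℝ) : EReal) + x (idx n hn j))) ⊔
        (((-uexp (i + 1) + 1 : ℝ) : EReal) + x (idx n hn i)) ≤
      (⨆ j ∈ Finset.Icc (i + 1) (n - 1), (((-uexp j : ℝ) : EReal) + x (idx n hn j))) ⊔
        x (idx n hn n) ⊔ ((-uexp n : ℝ) : EReal)) ∧
  (∀ j : Fin n, x j ≤ 0) ∧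
  (∀ i : ℕ, 1 ≤ i → i ≤ n - 2 → x (idx n hn i) ≤ x (idx n hn (i + 1))) ∧
  (2 ≤ n → x (idx n hn (n - 1)) ≤ ((uexp n : ℝ) : EReal) + x (idx n hn n))

/-- Strict feasibility: all defining inequalities of `tcex_n` hold strictly. -/
def tcexFeasStrict (n : ℕ) (hn : 0 < n) (x : Fin n → EReal) : Prop :=
  (∀ i : ℕ, 1 ≤ i → i ≤ n - 1 →
    (⨆ j ∈ Finset.Icc 1 (i - 1), (((-uexp i : ℝ) : EReal) + x (idx n hn j))) ⊔
        (((-uexp (i + 1) + 1 : ℝ) : EReal) + x (idx n hn i)) <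
      (⨆ j ∈ Finset.Icc (i + 1) (n - 1), (((-uexp j : ℝ) : EReal) + x (idx n hn j))) ⊔
        x (idx n hn n) ⊔ ((-uexp n : ℝ) : EReal)) ∧
  (∀ j : Fin n, x j < 0) ∧
  (∀ i : ℕ, 1 ≤ i → i ≤ n - 2 → x (idx n hn i) < x (idx n hn (i + 1))) ∧
  (2 ≤ n → x (idx n hn (n - 1)) < ((uexp n : ℝ) : EReal) + x (idx n hn n))

/-! `P` is closed because every constraint compares continuous functions of `x`. Conversely, for
`x ∈ P` and `t ≥ u_n` the point `x ⊔ (-t)` (coordinatewise) is a real point of `P`: all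
left-hand coefficients are `≤ 0`, so each left-hand side at `x ⊔ (-t)` is at most the one at `x`
or `-t`, and `-t ≤ -u_n` is dominated by the constant term on the right. At a real feasible
point, subtracting `ε·2^{n-j}` from `x_j` lowers the left-hand side of the `i`-th main constraint
by at least `ε·2^{n-i}` and its right-hand side by at most `ε·2^{n-i-1}`, which makes every
constraint strict. Hence `x` is a limit of real feasible points, each of which is a limit of
interior points. -/

open Filter Topology

lemma uexp_nonneg {k : ℕ} (hk : 1 ≤ k) : 0 ≤ uexp k := by
  have hk' : (1 : ℝ) ≤ k := by exact_mod_cast hk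
  have h : (2 : ℝ)⁻¹ ≤ 2 ^ ((k : ℝ) - 2) := by
    rw [← Real.rpow_neg_one]
    exact Real.rpow_le_rpow_of_exponent_le one_le_two (by linarith)
  unfold uexp; linarith

lemma one_le_uexp {k : ℕ} (hk : 2 ≤ k) : 1 ≤ uexp k := by
  have h : 1 ≤ (2 : ℝ) ^ ((k : ℝ) - 2) :=
    Real.one_le_rpow one_le_two (by rw [sub_nonneg]; exact_mod_cast hk)
  unfold uexp; linarith

lemma idx_val {n : ℕ} (hn : 0 < n) {j : ℕ} (hj : j ∈ Set.Icc 1 n) :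
    (idx n hn j).val = j - 1 :=
  Nat.mod_eq_of_lt (by grind)

lemma strictMonoOn_idx {n : ℕ} (hn : 0 < n) : StrictMonoOn (idx n hn) (Set.Icc 1 n) :=
  fun j hj k hk hjk => Fin.lt_def.2 (by rw [idx_val hn hj, idx_val hn hk]; grind)

lemma EReal.continuous_coe_add (c : ℝ) : Continuous fun y : EReal => (c : EReal) + y :=
  continuous_iff_continuousAt.2 fun _ =>
    (EReal.continuousAt_add (Or.inl (EReal.coe_ne_top c)) (Or.inl (EReal.coe_ne_bot c))).comp
      (continuous_const.prodMk continuous_id).continuousAt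

lemma EReal.coe_add_sup_le {a : ℝ} (ha : a ≤ 0) (y z : EReal) :
    (a : EReal) + (y ⊔ z) ≤ ((a : EReal) + y) ⊔ z := by
  rcases le_total y z with h | h
  · rw [sup_eq_right.2 h]
    exact le_sup_of_le_right (add_le_of_nonpos_left (EReal.coe_nonpos.2 ha))
  · rw [sup_eq_left.2 h]; exact le_sup_left

lemma continuous_biSup_coe_add {ι κ : Type*} (s : Finset ι) (c : ι → ℝ) (f : ι → κ) :
    Continuous fun x : κ → EReal => ⨆ j ∈ s, (c j : EReal) + x (f j) := by
  simp only [← Finset.sup_eq_iSup]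
  exact Continuous.finset_sup_apply fun j _ =>
    (EReal.continuous_coe_add _).comp (continuous_apply _)

lemma biSup_coe_lt_top {ι : Type*} (s : Finset ι) (g : ι → ℝ) :
    ⨆ j ∈ s, (g j : EReal) < ⊤ := by
  rw [← Finset.sup_eq_iSup]
  exact (Finset.sup_lt_iff bot_lt_top).2 fun j _ => EReal.coe_lt_top _

lemma isOpen_setOf_forall_Icc {X : Type*} [TopologicalSpace X] {p : ℕ → X → Prop} (a b : ℕ)
    (h : ∀ i, a ≤ i → i ≤ b → IsOpen {x | p i x}) :
    IsOpen {x | ∀ i, a ≤ i → i ≤ b → p i x} := by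
  have : {x | ∀ i, a ≤ i → i ≤ b → p i x} = ⋂ i ∈ Finset.Icc a b, {x | p i x} := by
    ext; simp [and_imp]
  rw [this]
  exact isOpen_biInter_finset fun i hi => h i (Finset.mem_Icc.1 hi).1 (Finset.mem_Icc.1 hi).2

section Tcex

variable (n : ℕ) (hn : 0 < n)

/-- Definitionally the two sides of the `i`-th main constraint of `tcexFeas`, so that
`hx.1 i h₁ h₂ : tcexLhs n hn i x ≤ tcexRhs n hn i x`. -/
noncomputable def tcexLhs (i : ℕ) (x : Fin n → EReal) : EReal :=
  (⨆ j ∈ Finset.Icc 1 (i - 1), (((-uexp i : ℝ) : EReal) + x (idx n hn j))) ⊔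
    (((-uexp (i + 1) + 1 : ℝ) : EReal) + x (idx n hn i))

noncomputable def tcexRhs (i : ℕ) (x : Fin n → EReal) : EReal :=
  (⨆ j ∈ Finset.Icc (i + 1) (n - 1), (((-uexp j : ℝ) : EReal) + x (idx n hn j))) ⊔
    x (idx n hn n) ⊔ ((-uexp n : ℝ) : EReal)

lemma continuous_tcexLhs (i : ℕ) : Continuous (tcexLhs n hn i) :=
  (continuous_biSup_coe_add _ _ _).sup ((EReal.continuous_coe_add _).comp (continuous_apply _))

lemma continuous_tcexRhs (i : ℕ) : Continuous (tcexRhs n hn i) :=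
  ((continuous_biSup_coe_add _ _ _).sup (continuous_apply _)).sup continuous_const

lemma tcexRhs_mono (i : ℕ) : Monotone (tcexRhs n hn i) := fun _ _ h => by
  unfold tcexRhs
  gcongr <;> exact h _

lemma isClosed_setOf_tcexFeas : IsClosed {x : Fin n → EReal | tcexFeas n hn x} := by
  simp only [tcexFeas, Set.ofPred_and, Set.ofPred_forall]
  refine .inter (isClosed_iInter fun i => isClosed_iInter fun _ => isClosed_iInter fun _ =>
    isClosed_le (continuous_tcexLhs n hn i) (continuous_tcexRhs n hn i)) (.inter ?_ (.inter ?_ ?_))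
  · exact isClosed_iInter fun j => isClosed_le (continuous_apply j) continuous_const
  · exact isClosed_iInter fun i => isClosed_iInter fun _ => isClosed_iInter fun _ =>
      isClosed_le (continuous_apply _) (continuous_apply _)
  · exact isClosed_iInter fun _ =>
      isClosed_le (continuous_apply _) ((EReal.continuous_coe_add _).comp (continuous_apply _))

lemma isOpen_setOf_tcexFeasStrict : IsOpen {x : Fin n → EReal | tcexFeasStrict n hn x} := by
  simp only [tcexFeasStrict, Set.ofPred_and]
  refine .inter (isOpen_setOf_forall_Icc _ _ fun i _ _ =>
    isOpen_lt (continuous_tcexLhs n hn i) (continuous_tcexRhs n hn i)) (.inter ?_ (.inter ?_ ?_))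
  · simp only [Set.ofPred_forall]
    exact isOpen_iInter_of_finite fun j => isOpen_lt (continuous_apply j) continuous_const
  · exact isOpen_setOf_forall_Icc _ _ fun _ _ _ =>
      isOpen_lt (continuous_apply _) (continuous_apply _)
  · simp only [Set.ofPred_forall]
    exact isOpen_iInter_of_finite fun _ =>
      isOpen_lt (continuous_apply _) ((EReal.continuous_coe_add _).comp (continuous_apply _))

lemma tcexFeas_of_tcexFeasStrict {x : Fin n → EReal} (h : tcexFeasStrict n hn x) :
    tcexFeas n hn x :=
  ⟨fun i h1 h2 => (h.1 i h1 h2).le, fun j => (h.2.1 j).le, fun i h1 h2 => (h.2.2.1 i h1 h2).le,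
    fun h2 => (h.2.2.2 h2).le⟩

lemma setOf_tcexFeasStrict_subset_interior :
    {x | tcexFeasStrict n hn x} ⊆ interior {x | tcexFeas n hn x} :=
  interior_maximal (fun _ => tcexFeas_of_tcexFeasStrict n hn) (isOpen_setOf_tcexFeasStrict n hn)

end Tcex

section Perturbation

variable {n : ℕ} {hn : 0 < n} (x w : Fin n → ℝ)

lemma tcexLhs_sub_le (hw : Antitone w) {i : ℕ} (hi : i ∈ Set.Icc 1 n) :
    tcexLhs n hn i (fun j => ((x j - w j : ℝ) : EReal)) ≤
      tcexLhs n hn i (fun j => (x j : EReal)) + ((-w (idx n hn i) : ℝ) : EReal) := by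
  have hterm : ∀ (a : ℝ) k, w (idx n hn i) ≤ w k →
      (a : EReal) + ((x k - w k : ℝ) : EReal) ≤
        ((a : EReal) + x k) + ((-w (idx n hn i) : ℝ) : EReal) :=
    fun a k hk => by exact_mod_cast (by linarith : a + (x k - w k) ≤ a + x k + -w (idx n hn i))
  refine sup_le (iSup₂_le fun j hj => ?_)
    ((hterm _ _ le_rfl).trans (add_le_add le_sup_right le_rfl))
  have hji : j ∈ Set.Icc 1 n ∧ j ≤ i := by grind
  exact (hterm _ _ (hw ((strictMonoOn_idx hn).monotoneOn hji.1 hi hji.2))).trans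
    (add_le_add (le_sup_of_le_left (le_iSup₂_of_le j hj le_rfl)) le_rfl)

lemma tcexRhs_le_sub_add (hw : Antitone w) {i : ℕ} (hi : i + 1 ≤ n)
    (hw₀ : 0 ≤ w (idx n hn (i + 1))) :
    tcexRhs n hn i (fun j => (x j : EReal)) ≤
      tcexRhs n hn i (fun j => ((x j - w j : ℝ) : EReal)) + (w (idx n hn (i + 1)) : EReal) := by
  have hle : ∀ k, k ∈ Set.Icc (i + 1) n → w (idx n hn k) ≤ w (idx n hn (i + 1)) :=
    fun k hk => hw ((strictMonoOn_idx hn).monotoneOn ⟨by omega, hi⟩ ⟨by grind, hk.2⟩ hk.1)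
  refine sup_le (sup_le (iSup₂_le fun j hj => ?_) ?_) ?_
  · have hj' := hle j (by grind)
    calc ((-uexp j : ℝ) : EReal) + x (idx n hn j)
        ≤ (((-uexp j : ℝ) : EReal) + ((x (idx n hn j) - w (idx n hn j) : ℝ) : EReal)) +
            w (idx n hn (i + 1)) := by exact_mod_cast (by linarith : -uexp j + x (idx n hn j) ≤
          -uexp j + (x (idx n hn j) - w (idx n hn j)) + w (idx n hn (i + 1)))
      _ ≤ _ :=
        add_le_add (le_sup_of_le_left (le_sup_of_le_left (le_iSup₂_of_le j hj le_rfl))) le_rfl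
  · have hn' := hle n ⟨hi, le_rfl⟩
    calc (x (idx n hn n) : EReal)
        ≤ ((x (idx n hn n) - w (idx n hn n) : ℝ) : EReal) + w (idx n hn (i + 1)) := by
          exact_mod_cast (by linarith : x (idx n hn n) ≤
            x (idx n hn n) - w (idx n hn n) + w (idx n hn (i + 1)))
      _ ≤ _ := add_le_add (le_sup_of_le_left le_sup_right) le_rfl
  · calc ((-uexp n : ℝ) : EReal) ≤ ((-uexp n : ℝ) : EReal) + w (idx n hn (i + 1)) :=
          le_add_of_nonneg_right (EReal.coe_nonneg.2 hw₀)
      _ ≤ _ := add_le_add le_sup_right le_rfl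

lemma tcexRhs_coe_lt_top (i : ℕ) : tcexRhs n hn i (fun j => (x j : EReal)) < ⊤ := by
  unfold tcexRhs
  simp only [← EReal.coe_add]
  exact sup_lt_iff.2
    ⟨sup_lt_iff.2 ⟨biSup_coe_lt_top _ _, EReal.coe_lt_top _⟩, EReal.coe_lt_top _⟩

lemma tcexLhs_sub_lt_tcexRhs_sub (hw : StrictAnti w) (hpos : ∀ j, 0 < w j) {i : ℕ}
    (hi : i ∈ Set.Icc 1 (n - 1))
    (h : tcexLhs n hn i (fun j => (x j : EReal)) ≤ tcexRhs n hn i (fun j => (x j : EReal))) :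
    tcexLhs n hn i (fun j => ((x j - w j : ℝ) : EReal)) <
      tcexRhs n hn i (fun j => ((x j - w j : ℝ) : EReal)) := by
  set r := (tcexRhs n hn i (fun j => ((x j - w j : ℝ) : EReal))).toReal
  have hr : tcexRhs n hn i (fun j => ((x j - w j : ℝ) : EReal)) = r :=
    (EReal.coe_toReal (tcexRhs_coe_lt_top _ i).ne (ne_bot_of_le_ne_bot (EReal.coe_ne_bot _)
      le_sup_right)).symm
  have hlt : w (idx n hn (i + 1)) < w (idx n hn i) :=
    hw (strictMonoOn_idx hn (by grind) (by grind) (by omega))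
  rw [hr]
  calc tcexLhs n hn i (fun j => ((x j - w j : ℝ) : EReal))
      ≤ tcexLhs n hn i (fun j => (x j : EReal)) + ((-w (idx n hn i) : ℝ) : EReal) :=
        tcexLhs_sub_le x w hw.antitone (by grind)
    _ ≤ tcexRhs n hn i (fun j => (x j : EReal)) + ((-w (idx n hn i) : ℝ) : EReal) :=
        add_le_add h le_rfl
    _ ≤ ((r : EReal) + w (idx n hn (i + 1))) + ((-w (idx n hn i) : ℝ) : EReal) :=
        add_le_add (hr ▸ tcexRhs_le_sub_add x w hw.antitone (by grind) (hpos _).le) le_rfl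
    _ < r := by exact_mod_cast (by linarith : r + w (idx n hn (i + 1)) + -w (idx n hn i) < r)

lemma tcexFeasStrict_sub_of_strictAnti (hx : tcexFeas n hn (fun j => (x j : EReal)))
    (hw : StrictAnti w) (hpos : ∀ j, 0 < w j) :
    tcexFeasStrict n hn (fun j => ((x j - w j : ℝ) : EReal)) := by
  obtain ⟨hmain, hnonpos, hmono, hlast⟩ := hx
  have hw_idx : ∀ i, 1 ≤ i → i + 1 ≤ n → w (idx n hn (i + 1)) < w (idx n hn i) :=
    fun i h1 h2 => hw (strictMonoOn_idx hn ⟨h1, by omega⟩ ⟨by omega, h2⟩ (by omega))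
  refine ⟨fun i h1 h2 => tcexLhs_sub_lt_tcexRhs_sub x w hw hpos ⟨h1, h2⟩ (hmain i h1 h2),
    fun j => ?_, fun i h1 h2 => ?_, fun h2 => ?_⟩ <;> beta_reduce at *
  · have := EReal.coe_nonpos.1 (hnonpos j)
    exact_mod_cast (by linarith [hpos j] : x j - w j < 0)
  · have := EReal.coe_le_coe_iff.1 (hmono i h1 h2)
    exact_mod_cast (by linarith [hw_idx i h1 (by omega)] :
      x (idx n hn i) - w (idx n hn i) < x (idx n hn (i + 1)) - w (idx n hn (i + 1)))
  · have hn1 := hw_idx (n - 1) (by omega) (by omega)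
    rw [Nat.sub_add_cancel hn] at hn1
    have : x (idx n hn (n - 1)) ≤ uexp n + x (idx n hn n) := by exact_mod_cast hlast h2
    exact_mod_cast (by linarith :
      x (idx n hn (n - 1)) - w (idx n hn (n - 1)) < uexp n + (x (idx n hn n) - w (idx n hn n)))

lemma strictAnti_mul_two_pow {ε : ℝ} (hε : 0 < ε) :
    StrictAnti fun j : Fin n => ε * 2 ^ (n - 1 - j.val) := fun j k hjk =>
  mul_lt_mul_of_pos_left (pow_lt_pow_right₀ one_lt_two (by omega)) hε

lemma tcexFeasStrict_sub_two_pow (hx : tcexFeas n hn (fun j => (x j : EReal))) {ε : ℝ}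
    (hε : 0 < ε) :
    tcexFeasStrict n hn (fun j => ((x j - ε * 2 ^ (n - 1 - j.val) : ℝ) : EReal)) :=
  tcexFeasStrict_sub_of_strictAnti x _ hx (strictAnti_mul_two_pow hε) fun _ => by positivity

end Perturbation

section Regularity

variable {n : ℕ} {hn : 0 < n}

lemma coe_mem_closure_interior_setOf_tcexFeas (x : Fin n → ℝ)
    (hx : tcexFeas n hn (fun j => (x j : EReal))) :
    (fun j => (x j : EReal)) ∈ closure (interior {y | tcexFeas n hn y}) := by
  have htend : Tendsto (fun ε : ℝ => fun j => ((x j - ε * 2 ^ (n - 1 - j.val) : ℝ) : EReal))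
      (𝓝[>] 0) (𝓝 fun j => (x j : EReal)) := by
    refine tendsto_pi_nhds.2 fun j => (continuous_coe_real_ereal.tendsto _).comp ?_
    have hcont : Continuous fun ε : ℝ => x j - ε * 2 ^ (n - 1 - j.val) := by fun_prop
    exact (hcont.tendsto' 0 _ (by simp)).mono_left nhdsWithin_le_nhds
  exact mem_closure_of_tendsto htend (eventually_mem_nhdsWithin.mono fun ε hε =>
    setOf_tcexFeasStrict_subset_interior n hn (tcexFeasStrict_sub_two_pow x hx hε))

lemma tcexLhs_sup_le {i : ℕ} (hi : 1 ≤ i) (x : Fin n → EReal) (c : EReal) :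
    tcexLhs n hn i (fun j => x j ⊔ c) ≤ tcexLhs n hn i x ⊔ c := by
  have hu : 1 ≤ uexp (i + 1) := one_le_uexp (by omega)
  unfold tcexLhs
  refine sup_le (iSup₂_le fun j hj => ?_) ?_
  · refine (EReal.coe_add_sup_le (neg_nonpos.2 (uexp_nonneg hi)) _ _).trans (sup_le_sup_right ?_ _)
    exact le_sup_of_le_left (le_iSup₂_of_le j hj le_rfl)
  · exact (EReal.coe_add_sup_le (by linarith) _ _).trans (sup_le_sup_right le_sup_right _)

lemma tcexFeas_sup_coe_neg {x : Fin n → EReal} (hx : tcexFeas n hn x) {t : ℝ}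
    (ht : uexp n ≤ t) :
    tcexFeas n hn (fun j => x j ⊔ ((-t : ℝ) : EReal)) := by
  obtain ⟨hmain, hnonpos, hmono, hlast⟩ := hx
  have hu : 0 ≤ uexp n := uexp_nonneg hn
  refine ⟨fun i h1 h2 => ?_, fun j => sup_le (hnonpos j) (EReal.coe_nonpos.2 (by linarith)),
    fun i h1 h2 => sup_le_sup_right (hmono i h1 h2) _, fun h2 => ?_⟩
  · calc tcexLhs n hn i (fun j => x j ⊔ ((-t : ℝ) : EReal))
        ≤ tcexLhs n hn i x ⊔ ((-t : ℝ) : EReal) := tcexLhs_sup_le h1 x _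
      _ ≤ tcexRhs n hn i x ⊔ ((-t : ℝ) : EReal) := sup_le_sup_right (hmain i h1 h2) _
      _ ≤ tcexRhs n hn i (fun j => x j ⊔ ((-t : ℝ) : EReal)) :=
        sup_le (tcexRhs_mono n hn i fun j => le_sup_left)
          ((EReal.coe_le_coe_iff.2 (by linarith)).trans le_sup_right)
  · refine sup_le ((hlast h2).trans (add_le_add le_rfl le_sup_left)) ?_
    calc ((-t : ℝ) : EReal) ≤ ((uexp n : ℝ) : EReal) + ((-t : ℝ) : EReal) :=
          le_add_of_nonneg_left (EReal.coe_nonneg.2 hu)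
      _ ≤ _ := add_le_add le_rfl le_sup_right

lemma mem_closure_interior_setOf_tcexFeas {x : Fin n → EReal} (hx : tcexFeas n hn x) :
    x ∈ closure (interior {y | tcexFeas n hn y}) := by
  have htend : Tendsto (fun t : ℝ => fun j => x j ⊔ ((-t : ℝ) : EReal)) atTop (𝓝 x) :=
    tendsto_pi_nhds.2 fun j => by
      simpa using tendsto_const_nhds.sup_nhds (EReal.tendsto_coe_atBot.comp tendsto_neg_atTop_atBot)
  refine isClosed_closure.mem_of_tendsto htend ((eventually_ge_atTop (uexp n)).mono fun t ht => ?_)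
  have hfeas := tcexFeas_sup_coe_neg hx ht
  have hreal : (fun j => x j ⊔ ((-t : ℝ) : EReal)) =
      fun j => ((x j ⊔ ((-t : ℝ) : EReal)).toReal : EReal) :=
    funext fun j => (EReal.coe_toReal ((hfeas.2.1 j).trans_lt EReal.zero_lt_top).ne
      (ne_bot_of_le_ne_bot (EReal.coe_ne_bot _) le_sup_right)).symm
  rw [hreal] at hfeas ⊢
  exact coe_mem_closure_interior_setOf_tcexFeas _ hfeas

end Regularity

/-- the feasible set `P` of `tcex_n` is regular (it equals the closure of
its interior in `(EReal)ⁿ`), and for every real point `x ∈ P` and `ε > 0`, the point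
`x − ε·(2^{n−1}, …, 2, 1)` satisfies all defining inequalities strictly. -/
theorem stmt17 (n : ℕ) (hn : 0 < n) :
    closure (interior {x : Fin n → EReal | tcexFeas n hn x}) =
      {x : Fin n → EReal | tcexFeas n hn x} ∧
    ∀ x : Fin n → ℝ, tcexFeas n hn (fun i => ((x i : ℝ) : EReal)) →
      ∀ ε : ℝ, 0 < ε →
        tcexFeasStrict n hn
          (fun i => ((x i - ε * 2 ^ (n - 1 - i.val) : ℝ) : EReal)) :=
  ⟨(closure_minimal interior_subset (isClosed_setOf_tcexFeas n hn)).antisymm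
      fun _ hx => mem_closure_interior_setOf_tcexFeas hx,
    fun x hx _ hε => tcexFeasStrict_sub_two_pow x hx hε⟩
end
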